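/- Let T be a commuting row contraction on H and let K be the closure of the span of {T^α D_{T*} h : h ∈ H, α ∈ ℕ^n}. Then for h ∈ H the following are equivalent: (i) h ⊥ K; (ii) D_{T*} T^{*α} h = 0 for every α ∈ ℕ^n; (iii) ∑_{α ∈ ℕ^n, |α| = k} γ_α ‖T^{*α} h‖² = ‖h‖² for every k ∈ ℕ. Consequently K^⊥ = H_c, where H_c := {h ∈ H : ∑_{|α|=k} γ_α ‖T^{*α} h‖² = ‖h‖² for all k ∈ ℕ}. -/

import Mathlib

open scoped InnerProductSpace

set_option maxHeartbeats 1000000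
set_option synthInstance.maxHeartbeats 400000

noncomputable section

namespace RowContr

instance {n : ℕ} {H : Type*} [NormedAddCommGroup H] [CompleteSpace H] :
    CompleteSpace (PiLp 2 fun _ : Fin n => H) :=
  inferInstance

/-- Ordered product `T^α = T 0 ^ α 0 ⬝ ⋯ ⬝ T (n-1) ^ α (n-1)`
(for commuting tuples the order is immaterial). -/
def mpow {n : ℕ} {H : Type*} [NormedAddCommGroup H] [InnerProductSpace ℂ H]
    (T : Fin n → H →L[ℂ] H) (α : Fin n → ℕ) : H →L[ℂ] H :=
  (List.ofFn fun i => (T i) ^ (α i)).prod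

/-- The finset of all multi-indices `α : Fin n → ℕ` with `|α| = k`. -/
def multiIdx (n k : ℕ) : Finset (Fin n → ℕ) :=
  (Fintype.piFinset fun _ : Fin n => Finset.range (k + 1)).filter fun α => ∑ i, α i = k

/-- The row operator `E^n → F` associated with a tuple of operators, acting on the
Hilbert direct sum `PiLp 2`. -/
def rowOp {n : ℕ} {E F : Type*} [NormedAddCommGroup E] [InnerProductSpace ℂ E]
    [NormedAddCommGroup F] [InnerProductSpace ℂ F]
    (T : Fin n → E →L[ℂ] F) : PiLp 2 (fun _ : Fin n => E) →L[ℂ] F :=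
  ∑ i, (T i).comp (PiLp.proj 2 (fun _ : Fin n => E) i)

/-- The `α`-th Taylor coefficient of the characteristic function of `T`, where `Dstar`
plays the role of the defect operator `D_{T*}` and `D` the role of `D_T`:
`θ_{T,α} = ∑_{j : α_j ≥ 1} γ_{α-e_j} • D_{T*} T^{*(α-e_j)} P_j D_T`. -/
def charCoeff {n : ℕ} {H : Type*} [NormedAddCommGroup H] [InnerProductSpace ℂ H]
    [CompleteSpace H] (T : Fin n → H →L[ℂ] H) (Dstar : H →L[ℂ] H)
    (D : PiLp 2 (fun _ : Fin n => H) →L[ℂ] PiLp 2 (fun _ : Fin n => H))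
    (α : Fin n → ℕ) : PiLp 2 (fun _ : Fin n => H) →L[ℂ] H :=
  ∑ j ∈ Finset.univ.filter (fun j => 0 < α j),
    (Nat.multinomial Finset.univ (α - Pi.single j 1) : ℂ) •
      (Dstar ∘L (star (mpow T (α - Pi.single j 1))) ∘L (PiLp.proj 2 (fun _ : Fin n => H) j) ∘L D)

/-- The closure of the span of `{T^α D_{T*} h : h ∈ H, |α| ≥ m}`. -/
def rangeSpanGE {n : ℕ} {H : Type*} [NormedAddCommGroup H] [InnerProductSpace ℂ H]
    (T : Fin n → H →L[ℂ] H) (Dstar : H →L[ℂ] H) (m : ℕ) : Submodule ℂ H :=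
  (Submodule.span ℂ
    {x : H | ∃ (α : Fin n → ℕ) (h : H), m ≤ ∑ i, α i ∧ x = mpow T α (Dstar h)}).topologicalClosure

/-- The closure of the span of `{T^α D_{T*} h : h ∈ H, |α| = m}`. -/
def rangeSpanEQ {n : ℕ} {H : Type*} [NormedAddCommGroup H] [InnerProductSpace ℂ H]
    (T : Fin n → H →L[ℂ] H) (Dstar : H →L[ℂ] H) (m : ℕ) : Submodule ℂ H :=
  (Submodule.span ℂ
    {x : H | ∃ (α : Fin n → ℕ) (h : H), ∑ i, α i = m ∧ x = mpow T α (Dstar h)}).topologicalClosure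

/-- The closure of the span of `{T^α D_{T*} h : h ∈ H, α ∈ ℕ^n}`. -/
def rangeSpanAll {n : ℕ} {H : Type*} [NormedAddCommGroup H] [InnerProductSpace ℂ H]
    (T : Fin n → H →L[ℂ] H) (Dstar : H →L[ℂ] H) : Submodule ℂ H :=
  (Submodule.span ℂ
    {x : H | ∃ (α : Fin n → ℕ) (h : H), x = mpow T α (Dstar h)}).topologicalClosure

/-- The set `H_c = {h ∈ H : ∑_{|α| = k} γ_α ‖T^{*α} h‖² = ‖h‖² for all k ∈ ℕ}`. -/
def Hc {n : ℕ} {H : Type*} [NormedAddCommGroup H] [InnerProductSpace ℂ H] [CompleteSpace H]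
    (T : Fin n → H →L[ℂ] H) : Set H :=
  {h : H | ∀ k : ℕ, ∑ α ∈ multiIdx n k,
    (Nat.multinomial Finset.univ α : ℝ) * ‖star (mpow T α) h‖ ^ 2 = ‖h‖ ^ 2}

end RowContr

/-! The defect identity `‖g‖² = ‖D_{T*} g‖² + ∑ⱼ ‖Tⱼ* g‖²`, applied to `g = T^{*α} h` and summed
with the weights `γ_α` over `|α| = k`, telescopes thanks to the multinomial Pascal rule
`γ_β = ∑_{β_j > 0} γ_{β - e_j}`: with `S_k = ∑_{|α| = k} γ_α ‖T^{*α} h‖²` one gets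
`S_k - S_{k+1} = ∑_{|α| = k} γ_α ‖D_{T*} T^{*α} h‖²`. As `S_0 = ‖h‖²`, condition (iii) says that all
these nonnegative sums vanish, which is (ii). Finally (i) ⇔ (ii) because
`⟪T^α D_{T*} g, h⟫ = ⟪g, D_{T*} T^{*α} h⟫`. -/

open Finset

theorem Pi.single_one_le_iff {ι : Type*} [DecidableEq ι] {β : ι → ℕ} {j : ι} :
    Pi.single j 1 ≤ β ↔ 0 < β j := by
  refine ⟨fun h => (by simpa using h j : 1 ≤ β j), fun h i => ?_⟩
  by_cases hi : i = j
  · subst hi; simpa [Nat.one_le_iff_ne_zero, Nat.pos_iff_ne_zero] using h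
  · simp [Pi.single_eq_of_ne hi]

theorem Finset.sum_add_single_one {ι : Type*} [Fintype ι] [DecidableEq ι] (α : ι → ℕ) (j : ι) :
    ∑ i, (α + Pi.single j 1 : ι → ℕ) i = ∑ i, α i + 1 := by
  simp [sum_add_distrib]

theorem Nat.multinomial_add_single_mul {ι : Type*} [Fintype ι] [DecidableEq ι]
    (g : ι → ℕ) (j : ι) :
    Nat.multinomial univ (g + Pi.single j 1) * (g j + 1)
      = Nat.multinomial univ g * (∑ i, g i + 1) := by
  have hj : j ∉ univ.erase j := notMem_erase j univ
  have hrest : ∀ i ∈ univ.erase j, (g + Pi.single j 1 : ι → ℕ) i = g i := fun i hi => by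
    simp [Pi.single_eq_of_ne (ne_of_mem_erase hi)]
  rw [← insert_erase (mem_univ j), Nat.multinomial_insert hj, Nat.multinomial_insert hj,
    Nat.multinomial_congr hrest, sum_congr rfl hrest, insert_erase (mem_univ j),
    ← add_sum_erase _ _ (mem_univ j)]
  simp only [Pi.add_apply, Pi.single_eq_same]
  rw [add_right_comm]
  linear_combination (Nat.multinomial (univ.erase j) g) *
    (Nat.add_one_mul_choose_eq (g j + ∑ i ∈ univ.erase j, g i) (g j)).symm

theorem Nat.multinomial_eq_sum_sub_single {ι : Type*} [Fintype ι] [DecidableEq ι]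
    (β : ι → ℕ) (hβ : β ≠ 0) :
    Nat.multinomial univ β
      = ∑ j ∈ univ.filter (0 < β ·), Nat.multinomial univ (β - Pi.single j 1) := by
  have hpos : 0 < ∑ i, β i := by
    obtain ⟨i, hi⟩ := Function.ne_iff.1 hβ
    exact (Nat.pos_of_ne_zero hi).trans_le (single_le_sum (fun _ _ => Nat.zero_le _) (mem_univ i))
  have hterm : ∀ j ∈ univ.filter (0 < β ·),
      Nat.multinomial univ (β - Pi.single j 1) * ∑ i, β i = Nat.multinomial univ β * β j := by
    intro j hj
    have hβj : 0 < β j := (mem_filter.1 hj).2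
    have hadd : β - Pi.single j 1 + Pi.single j 1 = β :=
      tsub_add_cancel_of_le (Pi.single_one_le_iff.2 hβj)
    have hsum : ∑ i, (β - Pi.single j 1 : ι → ℕ) i + 1 = ∑ i, β i := by
      rw [← sum_add_single_one, hadd]
    have hβj' : (β - Pi.single j 1 : ι → ℕ) j + 1 = β j := by simp; omega
    have := Nat.multinomial_add_single_mul (β - Pi.single j 1) j
    rwa [hadd, hsum, hβj', eq_comm] at this
  refine Nat.eq_of_mul_eq_mul_right hpos ?_
  rw [sum_mul, sum_congr rfl hterm, ← mul_sum, sum_filter_of_ne fun i _ h => Nat.pos_of_ne_zero h]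

section HilbertSpace

variable {𝕜 E F : Type*} [RCLike 𝕜] [NormedAddCommGroup E] [InnerProductSpace 𝕜 E]
  [CompleteSpace E] [NormedAddCommGroup F] [InnerProductSpace 𝕜 F] [CompleteSpace F]

open ContinuousLinearMap in
theorem norm_sq_eq_norm_sq_add_sum_norm_sq_star {ι : Type*} [Fintype ι] (T : ι → E →L[𝕜] E)
    {D : E →L[𝕜] E} (hD : IsSelfAdjoint D) (hD2 : D ∘L D = 1 - ∑ i, T i ∘L star (T i)) (g : E) :
    ‖g‖ ^ 2 = ‖D g‖ ^ 2 + ∑ i, ‖star (T i) g‖ ^ 2 := by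
  have hT : ∀ i, ‖star (T i) g‖ ^ 2 = RCLike.re ⟪(T i ∘L star (T i)) g, g⟫_𝕜 := fun i => by
    rw [apply_norm_sq_eq_inner_adjoint_left, ← star_eq_adjoint, star_star]
  have hDg : ‖D g‖ ^ 2 = RCLike.re ⟪(D ∘L D) g, g⟫_𝕜 := by
    rw [apply_norm_sq_eq_inner_adjoint_left, ← star_eq_adjoint, hD.star_eq]
  rw [hDg, sum_congr rfl fun i _ => hT i, ← map_sum, ← map_add, ← sum_inner, ← inner_add_left,
    hD2]
  simp

open ContinuousLinearMap in
theorem mem_orthogonal_closure_span_iUnion_range_iff {ι : Type*} (A : ι → E →L[𝕜] F) (x : F) :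
    x ∈ (Submodule.span 𝕜 (⋃ i, Set.range (A i))).topologicalClosureᗮ ↔
      ∀ i, adjoint (A i) x = 0 := by
  have hrange : ∀ i, Submodule.span 𝕜 (Set.range (A i)) = (A i).range := fun i => by
    rw [← coe_coe, ← LinearMap.coe_range]; exact Submodule.span_eq _
  simp only [Submodule.orthogonal_closure, Submodule.span_iUnion, hrange,
    ← Submodule.iInf_orthogonal, Submodule.mem_iInf, orthogonal_range, LinearMap.mem_ker, coe_coe]

end HilbertSpace

namespace RowContr

theorem mem_multiIdx {n k : ℕ} {α : Fin n → ℕ} : α ∈ multiIdx n k ↔ ∑ i, α i = k := by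
  refine ⟨fun h => (mem_filter.1 h).2, fun h => mem_filter.2 ⟨?_, h⟩⟩
  refine Fintype.mem_piFinset.2 fun i => mem_range.2 (Nat.lt_succ_of_le ?_)
  exact h ▸ single_le_sum (fun _ _ => Nat.zero_le _) (mem_univ i)

theorem multiIdx_zero (n : ℕ) : multiIdx n 0 = {0} := by
  ext α
  simp [mem_multiIdx, sum_eq_zero_iff, funext_iff]

theorem sum_multiIdx_succ {n k : ℕ} {M : Type*} [AddCommMonoid M] (x : (Fin n → ℕ) → M) :
    ∑ β ∈ multiIdx n (k + 1), Nat.multinomial univ β • x β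
      = ∑ α ∈ multiIdx n k, Nat.multinomial univ α • ∑ j, x (α + Pi.single j 1) := by
  have hpascal : ∀ β ∈ multiIdx n (k + 1), Nat.multinomial univ β • x β
      = ∑ j, if 0 < β j then Nat.multinomial univ (β - Pi.single j 1) • x β else 0 := by
    intro β hβ
    have hβ0 : β ≠ 0 := by
      rintro rfl
      simp [mem_multiIdx] at hβ
    rw [Nat.multinomial_eq_sum_sub_single β hβ0, sum_smul, sum_filter]
  simp only [sum_congr rfl hpascal, smul_sum]
  rw [sum_comm, sum_comm (s := multiIdx n k)]
  refine sum_congr rfl fun j _ => ?_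
  rw [← sum_filter]
  refine sum_nbij' (· - Pi.single j 1) (· + Pi.single j 1) ?_ ?_ ?_ ?_ ?_
  · intro β hβ
    rw [mem_filter, mem_multiIdx] at hβ
    rw [mem_multiIdx, ← Nat.add_right_cancel_iff, ← sum_add_single_one,
      tsub_add_cancel_of_le (Pi.single_one_le_iff.2 hβ.2), hβ.1]
  · intro α hα
    rw [mem_filter, mem_multiIdx, sum_add_single_one, mem_multiIdx.1 hα]
    simp
  · intro β hβ
    exact tsub_add_cancel_of_le (Pi.single_one_le_iff.2 (mem_filter.1 hβ).2)
  · intro α _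
    exact add_tsub_cancel_right α _
  · intro β hβ
    rw [tsub_add_cancel_of_le (Pi.single_one_le_iff.2 (mem_filter.1 hβ).2)]

section Monomials

variable {n : ℕ} {H : Type*} [NormedAddCommGroup H] [InnerProductSpace ℂ H]
  {T : Fin n → H →L[ℂ] H}

theorem pairwise_commute_pow (hcomm : ∀ i j, Commute (T i) (T j)) (α : Fin n → ℕ) :
    Set.Pairwise (univ : Finset (Fin n)) (Function.onFun Commute fun i => T i ^ α i) :=
  fun i _ j _ _ => ((hcomm i j).pow_left _).pow_right _

theorem mpow_eq_noncommProd (hcomm : ∀ i j, Commute (T i) (T j)) (α : Fin n → ℕ) :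
    mpow T α = univ.noncommProd (fun i => T i ^ α i) (pairwise_commute_pow hcomm α) := by
  simp only [mpow, Finset.noncommProd, Fin.univ_val_map, Multiset.noncommProd_coe]

theorem mpow_add (hcomm : ∀ i j, Commute (T i) (T j)) (α β : Fin n → ℕ) :
    mpow T (α + β) = mpow T α * mpow T β := by
  simp only [mpow_eq_noncommProd hcomm, Pi.add_apply, pow_add]
  exact noncommProd_mul_distrib (fun i => T i ^ α i) (fun i => T i ^ β i) _ _
    fun i _ j _ _ => ((hcomm i j).pow_left _).pow_right _

theorem mpow_single_one (hcomm : ∀ i j, Commute (T i) (T j)) (j : Fin n) :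
    mpow T (Pi.single j 1) = T j := by
  rw [mpow_eq_noncommProd hcomm, ← mul_noncommProd_erase _ (mem_univ j)]
  convert mul_one (T j)
  · simp
  · exact noncommProd_eq_pow_card _ _ _ 1 (fun i hi => by
      simp [Pi.single_eq_of_ne (ne_of_mem_erase hi)]) |>.trans (one_pow _)

theorem mpow_zero : mpow T 0 = 1 :=
  List.prod_eq_one fun _ hx => by
    obtain ⟨i, rfl⟩ := List.mem_ofFn.1 hx
    simp

end Monomials

section Defect

variable {n : ℕ} {H : Type*} [NormedAddCommGroup H] [InnerProductSpace ℂ H]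
  {T : Fin n → H →L[ℂ] H} {Dstar : H →L[ℂ] H}

theorem rangeSpanAll_eq_closure_span_iUnion_range :
    rangeSpanAll T Dstar
      = (Submodule.span ℂ (⋃ α, Set.range (mpow T α ∘L Dstar))).topologicalClosure := by
  rw [rangeSpanAll]
  congr 2
  ext x
  simp [eq_comm]

variable [CompleteSpace H]

theorem mem_orthogonal_rangeSpanAll_iff (hD : IsSelfAdjoint Dstar) (h : H) :
    h ∈ (rangeSpanAll T Dstar)ᗮ ↔ ∀ α, Dstar (star (mpow T α) h) = 0 := by
  rw [rangeSpanAll_eq_closure_span_iUnion_range, mem_orthogonal_closure_span_iUnion_range_iff]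
  simp only [ContinuousLinearMap.adjoint_comp]
  simp only [ContinuousLinearMap.comp_apply, ← ContinuousLinearMap.star_eq_adjoint, hD.star_eq]

theorem sum_multiIdx_zero_norm_sq (h : H) :
    ∑ α ∈ multiIdx n 0, (Nat.multinomial univ α : ℝ) * ‖star (mpow T α) h‖ ^ 2 = ‖h‖ ^ 2 := by
  simp [multiIdx_zero, mpow_zero, Nat.multinomial]

theorem sum_multiIdx_succ_add_sum_defect (hcomm : ∀ i j, Commute (T i) (T j))
    (hD : IsSelfAdjoint Dstar) (hD2 : Dstar ∘L Dstar = 1 - ∑ i, T i ∘L star (T i)) (h : H)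
    (k : ℕ) :
    ∑ α ∈ multiIdx n (k + 1), (Nat.multinomial univ α : ℝ) * ‖star (mpow T α) h‖ ^ 2
      + ∑ α ∈ multiIdx n k, (Nat.multinomial univ α : ℝ) * ‖Dstar (star (mpow T α) h)‖ ^ 2
      = ∑ α ∈ multiIdx n k, (Nat.multinomial univ α : ℝ) * ‖star (mpow T α) h‖ ^ 2 := by
  simp only [← nsmul_eq_mul]
  rw [sum_multiIdx_succ, ← sum_add_distrib]
  refine sum_congr rfl fun α _ => ?_
  rw [← smul_add, norm_sq_eq_norm_sq_add_sum_norm_sq_star T hD hD2 (star (mpow T α) h)]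
  simp only [mpow_add hcomm, mpow_single_one hcomm, star_mul]
  rw [add_comm]
  rfl

theorem forall_defect_star_mpow_eq_zero_iff (hcomm : ∀ i j, Commute (T i) (T j))
    (hD : IsSelfAdjoint Dstar) (hD2 : Dstar ∘L Dstar = 1 - ∑ i, T i ∘L star (T i)) (h : H) :
    (∀ α, Dstar (star (mpow T α) h) = 0) ↔
      ∀ k, ∑ α ∈ multiIdx n k, (Nat.multinomial univ α : ℝ) * ‖star (mpow T α) h‖ ^ 2
        = ‖h‖ ^ 2 := by
  have htele := sum_multiIdx_succ_add_sum_defect hcomm hD hD2 h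
  have hdefect : ∀ k, ∑ α ∈ multiIdx n k,
      (Nat.multinomial univ α : ℝ) * ‖Dstar (star (mpow T α) h)‖ ^ 2 = 0
        ↔ ∀ α ∈ multiIdx n k, Dstar (star (mpow T α) h) = 0 := fun k => by
    rw [sum_eq_zero_iff_of_nonneg fun α _ => by positivity]
    refine forall₂_congr fun α _ => ?_
    simp [(Nat.multinomial_pos _ _).ne']
  constructor
  · intro hzero k
    induction k with
    | zero => exact sum_multiIdx_zero_norm_sq h
    | succ k ih => rw [← ih, ← htele k, (hdefect k).2 fun α _ => hzero α, add_zero]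
  · intro hconst α
    have hsum := htele (∑ i, α i)
    rw [hconst, hconst, add_eq_left] at hsum
    exact (hdefect _).1 hsum α (mem_multiIdx.2 rfl)

end Defect

theorem statement_10_general {n : ℕ} {H : Type*} [NormedAddCommGroup H] [InnerProductSpace ℂ H]
    [CompleteSpace H]
    (T : Fin n → H →L[ℂ] H)
    (hcomm : ∀ i j, Commute (T i) (T j))
    (Dstar : H →L[ℂ] H) (hD1 : Dstar.IsPositive)
    (hD2 : Dstar ∘L Dstar = 1 - ∑ i, T i ∘L star (T i)) :
    (∀ h : H,
      (h ∈ (rangeSpanAll T Dstar)ᗮ ↔ ∀ α : Fin n → ℕ, Dstar (star (mpow T α) h) = 0) ∧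
      (h ∈ (rangeSpanAll T Dstar)ᗮ ↔ ∀ k : ℕ, ∑ α ∈ multiIdx n k,
        (Nat.multinomial Finset.univ α : ℝ) * ‖star (mpow T α) h‖ ^ 2 = ‖h‖ ^ 2)) ∧
    (((rangeSpanAll T Dstar)ᗮ : Set H) = Hc T) := by
  have hD : IsSelfAdjoint Dstar := hD1.isSelfAdjoint
  have horth := mem_orthogonal_rangeSpanAll_iff (T := T) hD
  have hdefect := forall_defect_star_mpow_eq_zero_iff hcomm hD hD2
  exact ⟨fun h => ⟨horth h, (horth h).trans (hdefect h)⟩,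
    Set.ext fun h => (horth h).trans (hdefect h)⟩

theorem statement_10 {n : ℕ} {H : Type*} [NormedAddCommGroup H] [InnerProductSpace ℂ H]
    [CompleteSpace H]
    (T : Fin n → H →L[ℂ] H)
    (hcomm : ∀ i j, Commute (T i) (T j))
    (hrow : ((1 : H →L[ℂ] H) - ∑ i, T i ∘L star (T i)).IsPositive)
    (Dstar : H →L[ℂ] H) (hD1 : Dstar.IsPositive)
    (hD2 : Dstar ∘L Dstar = 1 - ∑ i, T i ∘L star (T i)) :
    (∀ h : H,
      (h ∈ (rangeSpanAll T Dstar)ᗮ ↔ ∀ α : Fin n → ℕ, Dstar (star (mpow T α) h) = 0) ∧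
      (h ∈ (rangeSpanAll T Dstar)ᗮ ↔ ∀ k : ℕ, ∑ α ∈ multiIdx n k,
        (Nat.multinomial Finset.univ α : ℝ) * ‖star (mpow T α) h‖ ^ 2 = ‖h‖ ^ 2)) ∧
    (((rangeSpanAll T Dstar)ᗮ : Set H) = Hc T) :=
  statement_10_general T hcomm Dstar hD1 hD2

end RowContr
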